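/- For a > 0, b > 0, and any real m, the generalized Marcum-Q function admits the representation Q_m(a,b) = 1 − (b²/2)^m · exp(−(a²+b²)/2) · Φ̃₃(1, m+1; b²/2, a²b²/4). -/

import Mathlib

open scoped BigOperators
open MeasureTheory

/-- Term of the double series defining the regularized Φ̃₃ function. -/
noncomputable def phi3Term (b c w z : ℝ) (k m : ℕ) : ℝ :=
  Polynomial.eval b (ascPochhammer ℝ k) * (Real.Gamma (c + k + m))⁻¹ *
    w ^ k * z ^ m / (Nat.factorial k * Nat.factorial m)

/-- The regularized confluent hypergeometric function of two variables Φ̃₃. -/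
noncomputable def Phi3 (b c w z : ℝ) : ℝ :=
  ∑' k : ℕ, ∑' m : ℕ, phi3Term b c w z k m

/-- Modified Bessel function of the first kind of integer order (I₋ₙ = Iₙ). -/
noncomputable def besselI (n : ℤ) (x : ℝ) : ℝ :=
  ∑' m : ℕ, (x / 2) ^ (2 * m + n.natAbs) /
    (Nat.factorial m * Nat.factorial (m + n.natAbs))

/-- Modified Bessel function of the first kind of real order. -/
noncomputable def besselIR (ν x : ℝ) : ℝ :=
  ∑' m : ℕ, (x / 2) ^ ((2 * m : ℝ) + ν) * (Real.Gamma ((m : ℝ) + ν + 1))⁻¹ /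
    Nat.factorial m

/-- Generalized Marcum-Q function of integer order. -/
noncomputable def marcumQ (m : ℤ) (a b : ℝ) : ℝ :=
  ∫ x in Set.Ioi b,
    x ^ m / a ^ (m - 1) * Real.exp (-(a ^ 2 + x ^ 2) / 2) * besselI (m - 1) (a * x)

/-- Generalized Marcum-Q function of real order. -/
noncomputable def marcumQR (m a b : ℝ) : ℝ :=
  ∫ x in Set.Ioi b,
    x ^ m / a ^ (m - 1) * Real.exp (-(a ^ 2 + x ^ 2) / 2) * besselIR (m - 1) (a * x)

/-- The polynomials A_i(b,c;z) in the Φ̃₃ reduction formula. -/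
noncomputable def Acoef (b : ℕ) (c z : ℝ) (i : ℕ) : ℝ :=
  ((-1 : ℝ) ^ (b - 1) / Nat.factorial (b - 1)) *
    ∑ k ∈ Finset.range (i / 2 + 1),
      (-1 : ℝ) ^ k * Polynomial.eval ((b : ℝ) - i + k) (ascPochhammer ℝ (i - k)) *
        Polynomial.eval (c - i - 1 + k) (ascPochhammer ℝ (i - 2 * k)) * z ^ k /
        (Nat.factorial (i - 2 * k) * Nat.factorial k)

/-!
Expanding `I_{m-1}` termwise shows that the integrand of `Q_m(a, b)` is a Poisson mixture, with
weights `e^{-a²/2} (a²/2)^j / j!`, of chi densities with `2(m + j)` degrees of freedom. After the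
substitution `t = x²/2` the tail of the `j`-th density beyond `b` is the regularized upper
incomplete gamma function `Γ(m+j, u)/Γ(m+j) = 1 - u^{m+j} e^{-u} ∑ₖ uᵏ/Γ(m+j+1+k)`, `u = b²/2`. For
positive order this telescopes from the recurrence `γ(s+1, u) = s γ(s, u) - uˢ e^{-u}` of the lower
function; the recurrence `Γ(s+1, u) = s Γ(s, u) + uˢ e^{-u}` carries it to every real order. The
Poisson weights sum to `1`, and what remains is the double series of `Φ̃₃(1, m+1; u, a²b²/4)` summed
in the other order; the exchange is legitimate because `1/Γ(c+n) = O(2ⁿ/n!)`.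
-/

open Real MeasureTheory Set Filter Topology
open scoped Nat

-- `Real.Gamma` is `0` at its poles, so `(Gamma s)⁻¹` is the entire function `1/Γ` and this holds
-- for every `s`.
theorem inv_Gamma_eq_mul_inv_Gamma_add_one (s : ℝ) : (Gamma s)⁻¹ = s * (Gamma (s + 1))⁻¹ := by
  rcases eq_or_ne s 0 with rfl | hs
  · simp
  · rw [Gamma_add_one hs, mul_inv, mul_inv_cancel_left₀ hs]

theorem factorial_mul_Gamma_le_Gamma_add_nat {x : ℝ} (hx : 1 ≤ x) (n : ℕ) :
    n ! * Gamma x ≤ Gamma (x + n) := by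
  induction n with
  | zero => simp
  | succ n ih =>
    have hxn : 0 < x + n := by positivity
    rw [Nat.factorial_succ, Nat.cast_mul, Nat.cast_add_one, ← add_assoc, Gamma_add_one hxn.ne',
      mul_assoc]
    have hΓ := Gamma_pos_of_pos (show 0 < x by linarith)
    exact mul_le_mul (by linarith) ih (by positivity) hxn.le

theorem exists_abs_inv_Gamma_add_nat_le (c : ℝ) :
    ∃ C, ∀ n : ℕ, |(Gamma (c + n))⁻¹| ≤ C * 2 ^ n / n ! := by
  obtain ⟨N, hN⟩ : ∃ N : ℕ, 1 ≤ c + N := ⟨⌈1 - c⌉₊, by linarith [Nat.le_ceil (1 - c)]⟩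
  have hΓN : 0 < Gamma (c + N) := Gamma_pos_of_pos (by linarith)
  refine ⟨∑ n ∈ Finset.range N, |(Gamma (c + n))⁻¹| * n ! + N ! / Gamma (c + N), fun n => ?_⟩
  rw [le_div_iff₀ (by positivity)]
  rcases lt_or_ge n N with hn | hn
  · calc |(Gamma (c + n))⁻¹| * n ! ≤ ∑ n ∈ Finset.range N, |(Gamma (c + n))⁻¹| * n ! :=
          Finset.single_le_sum (f := fun n : ℕ => |(Gamma (c + n))⁻¹| * (n ! : ℝ))
            (fun i _ => by positivity) (Finset.mem_range.2 hn)
      _ ≤ ∑ n ∈ Finset.range N, |(Gamma (c + n))⁻¹| * n ! + N ! / Gamma (c + N) :=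
          le_add_of_nonneg_right (by positivity)
      _ ≤ _ := le_mul_of_one_le_right (by positivity) (one_le_pow₀ one_le_two)
  · obtain ⟨q, rfl⟩ := Nat.exists_eq_add_of_le hn
    have hΓ : q ! * Gamma (c + N) ≤ Gamma (c + ↑(N + q)) := by
      simpa [add_assoc] using factorial_mul_Gamma_le_Gamma_add_nat hN q
    have hfac : ((N + q)! : ℝ) ≤ 2 ^ (N + q) * (N ! * q !) := by
      rw [← Nat.choose_mul_factorial_mul_factorial (Nat.le_add_right N q), Nat.add_sub_cancel_left]
      push_cast
      rw [mul_assoc]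
      gcongr
      exact_mod_cast Nat.choose_le_two_pow _ _
    calc |(Gamma (c + ↑(N + q)))⁻¹| * (N + q)!
        ≤ (q ! * Gamma (c + N))⁻¹ * (2 ^ (N + q) * (N ! * q !)) := by
          have hpos : 0 < q ! * Gamma (c + N) := by positivity
          rw [abs_of_pos (inv_pos.2 (hpos.trans_le hΓ))]
          exact mul_le_mul (inv_anti₀ hpos hΓ) hfac (by positivity) (by positivity)
      _ = N ! / Gamma (c + N) * 2 ^ (N + q) := by field_simp
      _ ≤ _ := mul_le_mul_of_nonneg_right (le_add_of_nonneg_left (by positivity)) (by positivity)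

theorem summable_pow_div_factorial_mul_pow_div_Gamma (s z u : ℝ) :
    Summable fun p : ℕ × ℕ => z ^ p.1 / p.1 ! * (u ^ p.2 / Gamma (s + p.1 + p.2)) := by
  obtain ⟨C, hC⟩ := exists_abs_inv_Gamma_add_nat_le s
  have hC0 : 0 ≤ C := by simpa using (abs_nonneg _).trans (hC 0)
  refine Summable.of_norm_bounded ((summable_pow_div_factorial (2 * |z|)).mul_of_nonneg
    ((summable_pow_div_factorial (2 * |u|)).mul_left C) (fun _ => by positivity)
    (fun _ => by positivity)) fun ⟨j, k⟩ => ?_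
  have hfac : (k ! : ℝ) ≤ (j + k)! := by exact_mod_cast Nat.factorial_le (Nat.le_add_left k j)
  have hΓ : |(Gamma (s + j + k))⁻¹| ≤ C * 2 ^ (j + k) / k ! := by
    refine (hC (j + k)).trans_eq' (by push_cast; ring_nf) |>.trans ?_
    exact div_le_div_of_nonneg_left (by positivity) (by positivity) hfac
  calc ‖z ^ j / j ! * (u ^ k / Gamma (s + j + k))‖
      = |z| ^ j / j ! * (|u| ^ k * |(Gamma (s + j + k))⁻¹|) := by
        simp [div_eq_mul_inv]
    _ ≤ |z| ^ j / j ! * (|u| ^ k * (C * 2 ^ (j + k) / k !)) := by gcongr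
    _ = (2 * |z|) ^ j / j ! * (C * ((2 * |u|) ^ k / k !)) := by ring

theorem summable_pow_div_Gamma (s u : ℝ) : Summable fun k : ℕ => u ^ k / Gamma (s + k) := by
  simpa using (summable_pow_div_factorial_mul_pow_div_Gamma s 0 u).prod_factor 0

noncomputable def upperIncGamma (s u : ℝ) : ℝ := ∫ t in Ioi u, t ^ (s - 1) * exp (-t)

noncomputable def lowerIncGamma (s u : ℝ) : ℝ := ∫ t in Ioc 0 u, t ^ (s - 1) * exp (-t)

noncomputable def incGammaSeries (s u : ℝ) : ℝ := ∑' k : ℕ, u ^ k / Gamma (s + 1 + k)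

theorem integrableOn_rpow_mul_exp_neg_Ioi (s : ℝ) {u : ℝ} (hu : 0 < u) :
    IntegrableOn (fun t => t ^ s * exp (-t)) (Ioi u) :=
  integrable_of_isBigO_exp_neg one_half_pos
    (fun _ ht => ((continuousAt_rpow_const _ _ (Or.inl (hu.trans_le ht).ne')).mul
      (continuous_exp.comp continuous_neg).continuousAt).continuousWithinAt)
    ((Gamma_integrand_isLittleO s).isBigO.congr_left fun _ => mul_comm _ _)

theorem integrableOn_rpow_sub_one_mul_exp_neg_Ioi_zero {s : ℝ} (hs : 0 < s) :
    IntegrableOn (fun t => t ^ (s - 1) * exp (-t)) (Ioi 0) :=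
  (GammaIntegral_convergent hs).congr_fun (fun _ _ => mul_comm _ _) measurableSet_Ioi

theorem upperIncGamma_add_one {u : ℝ} (hu : 0 < u) (s : ℝ) :
    upperIncGamma (s + 1) u = s * upperIncGamma s u + u ^ s * exp (-u) := by
  have hderiv : ∀ x ∈ Ici u, HasDerivAt (fun x => -(x ^ s * exp (-x)))
      (x ^ (s + 1 - 1) * exp (-x) - s * (x ^ (s - 1) * exp (-x))) x := by
    intro x hx
    refine (((hasDerivAt_rpow_const (p := s) (Or.inl (hu.trans_le hx).ne')).mul
      (hasDerivAt_neg x).exp).neg).congr_deriv ?_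
    rw [add_sub_cancel_right]
    ring
  have hint_succ := integrableOn_rpow_mul_exp_neg_Ioi (s + 1 - 1) hu
  have hint := (integrableOn_rpow_mul_exp_neg_Ioi (s - 1) hu).const_mul s
  have hlim : Tendsto (fun x => -(x ^ s * exp (-x))) atTop (𝓝 0) := by
    simpa using (tendsto_rpow_mul_exp_neg_mul_atTop_nhds_zero s 1 one_pos).neg
  have h := integral_Ioi_of_hasDerivAt_of_tendsto' hderiv (hint_succ.sub hint) hlim
  rw [integral_sub hint_succ hint, integral_const_mul] at h
  rw [upperIncGamma, upperIncGamma]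
  linarith

theorem lowerIncGamma_add_upperIncGamma {s u : ℝ} (hs : 0 < s) (hu : 0 ≤ u) :
    lowerIncGamma s u + upperIncGamma s u = Gamma s := by
  have hint := integrableOn_rpow_sub_one_mul_exp_neg_Ioi_zero hs
  rw [Gamma_eq_integral hs, lowerIncGamma, upperIncGamma, ← setIntegral_union
    (Ioc_disjoint_Ioi le_rfl) measurableSet_Ioi (hint.mono_set Ioc_subset_Ioi_self)
    (hint.mono_set (Ioi_subset_Ioi hu)), Ioc_union_Ioi_eq_Ioi hu]
  exact setIntegral_congr_fun measurableSet_Ioi fun t _ => mul_comm _ _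

theorem lowerIncGamma_nonneg (s u : ℝ) : 0 ≤ lowerIncGamma s u :=
  setIntegral_nonneg measurableSet_Ioc fun _ ht => by have := ht.1; positivity

theorem upperIncGamma_le_Gamma {s u : ℝ} (hs : 0 < s) (hu : 0 ≤ u) :
    upperIncGamma s u ≤ Gamma s := by
  linarith [lowerIncGamma_add_upperIncGamma hs hu, lowerIncGamma_nonneg s u]

theorem lowerIncGamma_le_rpow_div {s u : ℝ} (hs : 0 < s) (hu : 0 ≤ u) :
    lowerIncGamma s u ≤ u ^ s / s := by
  have hint : IntegrableOn (fun t => t ^ (s - 1) * exp (-t)) (Ioc 0 u) :=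
    (integrableOn_rpow_sub_one_mul_exp_neg_Ioi_zero hs).mono_set Ioc_subset_Ioi_self
  have hpow : IntegrableOn (fun t : ℝ => t ^ (s - 1)) (Ioc 0 u) :=
    (intervalIntegrable_iff_integrableOn_Ioc_of_le hu).1
      (intervalIntegral.intervalIntegrable_rpow' (by linarith))
  calc lowerIncGamma s u ≤ ∫ t in Ioc 0 u, t ^ (s - 1) :=
        setIntegral_mono_on hint hpow measurableSet_Ioc fun t ht => by
          have := ht.1
          exact mul_le_of_le_one_right (by positivity) (exp_le_one_iff.2 (by linarith))
    _ = u ^ s / s := by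
        rw [← intervalIntegral.integral_of_le hu, integral_rpow (Or.inl (by linarith)),
          sub_add_cancel, zero_rpow hs.ne', sub_zero]

theorem inv_Gamma_mul_lowerIncGamma_sub_add_one {s u : ℝ} (hs : 0 < s) (hu : 0 < u) :
    (Gamma s)⁻¹ * lowerIncGamma s u - (Gamma (s + 1))⁻¹ * lowerIncGamma (s + 1) u =
      u ^ s * exp (-u) / Gamma (s + 1) := by
  have h := lowerIncGamma_add_upperIncGamma hs hu.le
  have h' := lowerIncGamma_add_upperIncGamma (s := s + 1) (by linarith) hu.le
  rw [upperIncGamma_add_one hu, Gamma_add_one hs.ne'] at h'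
  rw [Gamma_add_one hs.ne']
  have := (Gamma_pos_of_pos hs).ne'
  field_simp
  linear_combination s * h - h'

theorem inv_Gamma_mul_lowerIncGamma {s u : ℝ} (hs : 0 < s) (hu : 0 < u) :
    (Gamma s)⁻¹ * lowerIncGamma s u = u ^ s * exp (-u) * incGammaSeries s u := by
  set r : ℕ → ℝ := fun k => (Gamma (s + k))⁻¹ * lowerIncGamma (s + k) u
  have hstep : ∀ k : ℕ, u ^ s * exp (-u) * (u ^ k / Gamma (s + 1 + k)) = r k - r (k + 1) := by
    intro k
    have h := inv_Gamma_mul_lowerIncGamma_sub_add_one (s := s + k) (by positivity) hu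
    simp only [r]
    rw [Nat.cast_add_one, ← add_assoc, h, rpow_add hu, rpow_natCast, add_right_comm]
    ring
  have hbound : ∀ k : ℕ, r k ≤ u ^ s * (u ^ k / Gamma (s + 1 + k)) := by
    intro k
    have hsk : 0 < s + k := by positivity
    calc r k ≤ (Gamma (s + k))⁻¹ * (u ^ (s + k) / (s + k)) :=
          mul_le_mul_of_nonneg_left (lowerIncGamma_le_rpow_div hsk hu.le)
            (inv_nonneg.2 (Gamma_pos_of_pos hsk).le)
      _ = u ^ s * (u ^ k / Gamma (s + 1 + k)) := by
          rw [add_right_comm, Gamma_add_one hsk.ne', rpow_add hu, rpow_natCast]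
          field_simp
  have hr : Tendsto r atTop (𝓝 0) :=
    squeeze_zero (fun k => mul_nonneg (inv_nonneg.2 (Gamma_pos_of_pos (by positivity)).le)
      (lowerIncGamma_nonneg _ _)) hbound
      (by simpa using ((summable_pow_div_Gamma (s + 1) u).tendsto_atTop_zero.const_mul (u ^ s)))
  have hsum : HasSum (fun k : ℕ => u ^ s * exp (-u) * (u ^ k / Gamma (s + 1 + k))) (r 0) := by
    refine (hasSum_iff_tendsto_nat_of_nonneg (fun k => ?_) _).2 ?_
    · have := Gamma_pos_of_pos (show 0 < s + 1 + k by positivity)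
      positivity
    · simp_rw [hstep, Finset.sum_range_sub']
      simpa using tendsto_const_nhds.sub hr
  rw [incGammaSeries, ← tsum_mul_left, hsum.tsum_eq]
  simp [r]

theorem incGammaSeries_eq_inv_Gamma_add_mul {u : ℝ} (s : ℝ) :
    incGammaSeries s u = (Gamma (s + 1))⁻¹ + u * incGammaSeries (s + 1) u := by
  rw [incGammaSeries, (summable_pow_div_Gamma (s + 1) u).tsum_eq_zero_add, incGammaSeries,
    ← tsum_mul_left]
  congr 1
  · simp
  · refine tsum_congr fun k => ?_
    push_cast
    ring_nf

theorem inv_Gamma_mul_upperIncGamma {u : ℝ} (hu : 0 < u) (s : ℝ) :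
    (Gamma s)⁻¹ * upperIncGamma s u = 1 - u ^ s * exp (-u) * incGammaSeries s u := by
  obtain ⟨n, hn⟩ : ∃ n : ℕ, 0 < s + n := (exists_nat_gt (-s)).imp fun _ h => by linarith
  induction n generalizing s with
  | zero =>
    have hs : 0 < s := by simpa using hn
    rw [← inv_Gamma_mul_lowerIncGamma hs hu, eq_sub_iff_add_eq, ← mul_add, add_comm,
      lowerIncGamma_add_upperIncGamma hs hu.le, inv_mul_cancel₀ (Gamma_pos_of_pos hs).ne']
  | succ n ih =>
    have h := ih (s + 1) (by push_cast at hn; linarith)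
    rw [upperIncGamma_add_one hu, rpow_add_one hu.ne'] at h
    rw [inv_Gamma_eq_mul_inv_Gamma_add_one, incGammaSeries_eq_inv_Gamma_add_mul]
    linear_combination h

theorem strictMonoOn_half_sq : StrictMonoOn (fun x : ℝ => x ^ 2 / 2) (Ici 0) :=
  fun x hx _ _ hxy => by
    have : 0 ≤ x := hx
    dsimp only
    gcongr

theorem image_half_sq_Ioi {b : ℝ} (hb : 0 ≤ b) :
    (fun x : ℝ => x ^ 2 / 2) '' Ioi b = Ioi (b ^ 2 / 2) :=
  ((continuous_pow 2).div_const 2).continuousOn.image_Ioi_of_strictMonoOn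
    (strictMonoOn_half_sq.mono (Ici_subset_Ici.2 hb))
    ((tendsto_pow_atTop two_ne_zero).atTop_div_const two_pos)

theorem integral_Ioi_mul_comp_half_sq {b : ℝ} (hb : 0 ≤ b) (g : ℝ → ℝ) :
    ∫ x in Ioi b, x * g (x ^ 2 / 2) = ∫ t in Ioi (b ^ 2 / 2), g t := by
  rw [← image_half_sq_Ioi hb, integral_image_eq_integral_abs_deriv_smul measurableSet_Ioi
    (fun x _ => by simpa using ((hasDerivAt_pow 2 x).div_const 2).hasDerivWithinAt)
    ((strictMonoOn_half_sq.mono (Ioi_subset_Ici hb)).injOn)]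
  refine setIntegral_congr_fun measurableSet_Ioi fun x hx => ?_
  rw [abs_of_pos (hb.trans_lt hx), smul_eq_mul]

theorem integrableOn_Ioi_mul_comp_half_sq {b : ℝ} (hb : 0 ≤ b) {g : ℝ → ℝ}
    (hg : IntegrableOn g (Ioi (b ^ 2 / 2))) :
    IntegrableOn (fun x => x * g (x ^ 2 / 2)) (Ioi b) := by
  rw [← image_half_sq_Ioi hb, integrableOn_image_iff_integrableOn_abs_deriv_smul measurableSet_Ioi
    (fun x _ => by simpa using ((hasDerivAt_pow 2 x).div_const 2).hasDerivWithinAt)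
    ((strictMonoOn_half_sq.mono (Ioi_subset_Ici hb)).injOn)] at hg
  refine hg.congr_fun (fun x hx => ?_) measurableSet_Ioi
  dsimp only
  rw [abs_of_pos (hb.trans_lt hx), smul_eq_mul]

/-- Density of the chi distribution with `2 s` degrees of freedom. -/
noncomputable def chiDensity (s x : ℝ) : ℝ :=
  (Gamma s)⁻¹ * (x * ((x ^ 2 / 2) ^ (s - 1) * exp (-(x ^ 2 / 2))))

theorem integral_chiDensity_Ioi {b : ℝ} (hb : 0 ≤ b) (s : ℝ) :
    ∫ x in Ioi b, chiDensity s x = (Gamma s)⁻¹ * upperIncGamma s (b ^ 2 / 2) := by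
  rw [upperIncGamma, ← integral_Ioi_mul_comp_half_sq hb, ← integral_const_mul]
  rfl

theorem integrableOn_chiDensity_Ioi {b : ℝ} (hb : 0 < b) (s : ℝ) :
    IntegrableOn (chiDensity s) (Ioi b) :=
  (integrableOn_Ioi_mul_comp_half_sq hb.le
    (integrableOn_rpow_mul_exp_neg_Ioi (s - 1) (by positivity))).const_mul _

theorem integral_norm_chiDensity_Ioi_le_one {b s : ℝ} (hb : 0 ≤ b) (hs : 0 < s) :
    ∫ x in Ioi b, ‖chiDensity s x‖ ≤ 1 := by
  have hΓ := Gamma_pos_of_pos hs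
  rw [setIntegral_congr_fun measurableSet_Ioi fun x hx => Real.norm_of_nonneg (by
      have : 0 < x := hb.trans_lt hx
      unfold chiDensity
      positivity),
    integral_chiDensity_Ioi hb, inv_mul_le_one₀ hΓ]
  exact upperIncGamma_le_Gamma hs (by positivity)

noncomputable def poissonWeight (r : ℝ) (j : ℕ) : ℝ := exp (-r) * r ^ j / j !

theorem hasSum_poissonWeight (r : ℝ) : HasSum (poissonWeight r) 1 := by
  have h := (NormedSpace.expSeries_div_hasSum_exp r).mul_left (exp (-r))
  rw [← exp_eq_exp_ℝ, ← exp_add, neg_add_cancel, exp_zero] at h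
  unfold poissonWeight
  simpa only [mul_div_assoc] using h

theorem marcumQR_integrand_eq_tsum (m : ℝ) {a x : ℝ} (ha : 0 < a) (hx : 0 < x) :
    x ^ m / a ^ (m - 1) * exp (-(a ^ 2 + x ^ 2) / 2) * besselIR (m - 1) (a * x) =
      ∑' j : ℕ, poissonWeight (a ^ 2 / 2) j * chiDensity (m + j) x := by
  rw [besselIR, ← tsum_mul_left]
  refine tsum_congr fun j => ?_
  have hax : (a * x / 2) ^ ((2 * j : ℝ) + (m - 1)) =
      (a ^ 2 / 2) ^ j * (x ^ 2 / 2) ^ j * (a ^ (m - 1) * (x / 2) ^ (m - 1)) := by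
    rw [show (2 * j : ℝ) = ((2 * j : ℕ) : ℝ) by push_cast; ring, rpow_add (by positivity),
      rpow_natCast, mul_div_assoc, mul_rpow ha.le (by positivity), pow_mul,
      show (a * (x / 2)) ^ 2 = a ^ 2 / 2 * (x ^ 2 / 2) by ring, mul_pow]
  have hxx : (x ^ 2 / 2) ^ (m + j - 1) = (x ^ 2 / 2) ^ j * (x ^ (m - 1) * (x / 2) ^ (m - 1)) := by
    rw [add_sub_right_comm, rpow_add (by positivity), rpow_natCast,
      ← mul_rpow hx.le (by positivity)]
    ring_nf
  have hxm : x ^ m = x * x ^ (m - 1) := by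
    rw [mul_comm, ← rpow_add_one hx.ne', sub_add_cancel]
  have hexp : exp (-(a ^ 2 + x ^ 2) / 2) = exp (-(a ^ 2 / 2)) * exp (-(x ^ 2 / 2)) := by
    rw [← exp_add]; ring_nf
  rw [chiDensity, poissonWeight, hax, hxx, hxm, hexp, show (j : ℝ) + (m - 1) + 1 = m + j by ring]
  have := (rpow_pos_of_pos ha (m - 1)).ne'
  field_simp

theorem marcumQR_eq_tsum (m : ℝ) {a b : ℝ} (ha : 0 < a) (hb : 0 < b) :
    marcumQR m a b = ∑' j : ℕ,
      poissonWeight (a ^ 2 / 2) j * ((Gamma (m + j))⁻¹ * upperIncGamma (m + j) (b ^ 2 / 2)) := by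
  set F : ℕ → ℝ → ℝ := fun j x => poissonWeight (a ^ 2 / 2) j * chiDensity (m + j) x
  have hw j : 0 ≤ poissonWeight (a ^ 2 / 2) j := by unfold poissonWeight; positivity
  have hint j : IntegrableOn (F j) (Ioi b) := (integrableOn_chiDensity_Ioi hb _).const_mul _
  have hnorm : Summable fun j => ∫ x in Ioi b, ‖F j x‖ := by
    refine Summable.of_norm_bounded_eventually_nat (hasSum_poissonWeight (a ^ 2 / 2)).summable ?_
    filter_upwards [eventually_gt_atTop ⌈-m⌉₊] with j hj
    have hmj : 0 < m + j := by linarith [Nat.lt_of_ceil_lt hj]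
    simp only [F, norm_mul, Real.norm_of_nonneg (hw j), integral_const_mul]
    rw [Real.norm_of_nonneg (integral_nonneg fun _ => norm_nonneg _)]
    exact mul_le_of_le_one_right (hw j) (integral_norm_chiDensity_Ioi_le_one hb.le hmj)
  rw [marcumQR, setIntegral_congr_fun measurableSet_Ioi
      fun x hx => marcumQR_integrand_eq_tsum m ha (hb.trans hx),
    ← integral_tsum_of_summable_integral_norm hint hnorm]
  simp only [F, integral_const_mul, integral_chiDensity_Ioi hb.le]

theorem pow_div_factorial_mul_incGammaSeries (s w z : ℝ) (j : ℕ) :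
    z ^ j / j ! * incGammaSeries (s + j) w =
      ∑' k : ℕ, z ^ j / j ! * (w ^ k / Gamma (s + 1 + j + k)) := by
  rw [incGammaSeries, ← tsum_mul_left, add_right_comm]

theorem summable_pow_div_factorial_mul_incGammaSeries (s w z : ℝ) :
    Summable fun j : ℕ => z ^ j / j ! * incGammaSeries (s + j) w := by
  simpa only [pow_div_factorial_mul_incGammaSeries] using
    (summable_pow_div_factorial_mul_pow_div_Gamma (s + 1) z w).prod

theorem Phi3_one_eq_tsum (s w z : ℝ) :
    Phi3 1 (s + 1) w z = ∑' j : ℕ, z ^ j / j ! * incGammaSeries (s + j) w := by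
  have hterm (k i : ℕ) :
      phi3Term 1 (s + 1) w z k i = z ^ i / i ! * (w ^ k / Gamma (s + 1 + i + k)) := by
    rw [phi3Term, ascPochhammer_eval_one, add_right_comm (s + 1)]
    field_simp
  simp only [Phi3, hterm, pow_div_factorial_mul_incGammaSeries]
  exact (summable_pow_div_factorial_mul_pow_div_Gamma (s + 1) z w).tsum_comm

/-- Q_m(a,b) = 1 − (b²/2)^m e^{−(a²+b²)/2} Φ̃₃(1,m+1;b²/2,a²b²/4), real m. -/
theorem marcumQR_phi3 (m a b : ℝ) (ha : 0 < a) (hb : 0 < b) :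
    marcumQR m a b =
      1 - (b ^ 2 / 2) ^ m * Real.exp (-(a ^ 2 + b ^ 2) / 2) *
        Phi3 1 (m + 1) (b ^ 2 / 2) (a ^ 2 * b ^ 2 / 4) := by
  have hu : 0 < b ^ 2 / 2 := by positivity
  rw [marcumQR_eq_tsum m ha hb, Phi3_one_eq_tsum, ← tsum_mul_left,
    ← (hasSum_poissonWeight (a ^ 2 / 2)).tsum_eq, ← Summable.tsum_sub
      (hasSum_poissonWeight _).summable
      ((summable_pow_div_factorial_mul_incGammaSeries m _ _).mul_left _)]
  refine tsum_congr fun j => ?_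
  rw [inv_Gamma_mul_upperIncGamma hu, poissonWeight, rpow_add hu, rpow_natCast,
    show -(a ^ 2 + b ^ 2) / 2 = -(a ^ 2 / 2) + -(b ^ 2 / 2) by ring, exp_add,
    show a ^ 2 * b ^ 2 / 4 = a ^ 2 / 2 * (b ^ 2 / 2) by ring, mul_pow]
  ring
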